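/- For every odd integer j ≥ 1, every even integer a ≥ 2, and every odd integer b ≥ 1, the rooted tree RT(0^j, a, b) is super edge-graceful. -/

import Mathlib

/-- Edge type of the rooted tree `RT(a₀, …, a_{n-1})`: one edge from the root to each
child `i` (`Sum.inl i`), and one edge from child `i` to each of its `a i` leaf children
(`Sum.inr ⟨i, m⟩`).  The number of edges is `q = n + ∑ i, a i`. -/
abbrev RTEdge (n : ℕ) (a : Fin n → ℕ) := (Fin n) ⊕ (Σ i : Fin n, Fin (a i))

/-- Vertex type of the rooted tree `RT(a₀, …, a_{n-1})`: the root (`none`), the children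
`some (.inl i)` of the root, and the leaves `some (.inr ⟨i, m⟩)` attached to child `i`.
The number of vertices is `p = q + 1`. -/
abbrev RTVertex (n : ℕ) (a : Fin n → ℕ) := Option (RTEdge n a)

/-- The vertex labeling induced by an edge labeling `f`: each vertex gets the sum of the
labels of the edges incident with it. -/
def vertexSum {n : ℕ} (a : Fin n → ℕ) (f : RTEdge n a → ℤ) : RTVertex n a → ℤ
  | none => ∑ i : Fin n, f (Sum.inl i)
  | some (Sum.inl i) => f (Sum.inl i) + ∑ m : Fin (a i), f (Sum.inr ⟨i, m⟩)
  | some (Sum.inr ⟨i, m⟩) => f (Sum.inr ⟨i, m⟩)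

/-- The target label set for `q` objects: `{0, ±1, …, ±(q-1)/2}` if `q` is odd, and
`{±1, …, ±(q/2)}` if `q` is even. -/
noncomputable def segSet (q : ℕ) : Finset ℤ :=
  if q % 2 = 0 then (Finset.Icc (-((q / 2 : ℕ) : ℤ)) ((q / 2 : ℕ) : ℤ)).erase 0
  else Finset.Icc (-((q / 2 : ℕ) : ℤ)) ((q / 2 : ℕ) : ℤ)

/-- The rooted tree `RT(a₀, …, a_{n-1})` is super edge-graceful: there is an edge
labeling which is a bijection onto `{0, ±1, …, ±(q-1)/2}` (`q` odd) resp.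
`{±1, …, ±(q/2)}` (`q` even) whose induced vertex labeling is a bijection onto
`{0, ±1, …, ±(p-1)/2}` (`p` odd) resp. `{±1, …, ±(p/2)}` (`p` even), where
`q = n + ∑ i, a i` and `p = q + 1`. -/
def IsSEG {n : ℕ} (a : Fin n → ℕ) : Prop :=
  ∃ f : RTEdge n a → ℤ,
    Set.BijOn f Set.univ ↑(segSet (n + ∑ i, a i)) ∧
    Set.BijOn (vertexSum a f) Set.univ ↑(segSet (n + ∑ i, a i + 1))

/-- The sequence `(0^j, a, b)` of length `j + 2`. -/
def seq2 (j a b : ℕ) : Fin (j + 2) → ℕ :=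
  fun i => if (i : ℕ) < j then 0 else if (i : ℕ) = j then a else b

/-! Write `N` for half the (even) number of edges and let the children of the root be
`v 0, …, v (j+1)`, so that `v j` carries `a` leaves and `v (j+1)` carries `b` leaves. Label the
root edges ("spokes") to the childless `v 0, …, v (j-1)` by `-1, 2, -2, …, (j+1)/2, -(j+1)/2`,
the spoke to `v j` by `1` and the spoke to `v (j+1)` by `N`; label the leaves under `v j` by
`±c, …, ±(N-1)` with `c = (j+1)/2 + (b+1)/2`, and the leaves under `v (j+1)` by `-N` and
`±((j+3)/2), …, ±(c-1)`. Every label `±1, …, ±N` is used once. The leaf labels under `v j`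
cancel, those under `v (j+1)` sum to `-N` and the spokes sum to `N`, so each vertex other than
the root and `v (j+1)` inherits the label of the edge above it, the root gets `N` and `v (j+1)`
gets `0`: the vertex labels are the edge labels together with `0`. -/

open Finset

section SegSet

lemma card_segSet (q : ℕ) : #(segSet q) = q := by
  have hIcc : #(Icc (-((q / 2 : ℕ) : ℤ)) ((q / 2 : ℕ) : ℤ)) = 2 * (q / 2) + 1 := by
    rw [Int.card_Icc]; omega
  unfold segSet
  split_ifs
  · rw [card_erase_of_mem (by rw [mem_Icc]; omega), hIcc]; omega
  · rw [hIcc]; omega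

variable {q : ℕ}

lemma mem_segSet_of_even (hq : Even q) {x : ℤ} :
    x ∈ segSet q ↔ x ≠ 0 ∧ -((q / 2 : ℕ) : ℤ) ≤ x ∧ x ≤ ((q / 2 : ℕ) : ℤ) := by
  rw [segSet, if_pos (Nat.even_iff.mp hq), mem_erase, mem_Icc]

lemma zero_notMem_segSet_of_even (hq : Even q) : (0 : ℤ) ∉ segSet q := by
  simp [mem_segSet_of_even hq]

lemma segSet_succ_of_even (hq : Even q) : segSet (q + 1) = insert 0 (segSet q) := by
  have hq' := Nat.even_iff.mp hq
  ext x
  rw [mem_insert, mem_segSet_of_even hq, segSet, if_neg (by omega), mem_Icc]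
  omega

end SegSet

lemma bijOn_option_elim {α β : Type*} {f : α → β} {s : Set β} {b : β}
    (hf : Set.BijOn f Set.univ s) (hb : b ∉ s) :
    Set.BijOn (fun o : Option α => o.elim b f) Set.univ (insert b s) := by
  refine ⟨?_, ?_, ?_⟩
  · rintro (_ | x) -
    exacts [Set.mem_insert b s, Set.mem_insert_of_mem b (hf.mapsTo trivial)]
  · rintro (_ | x) - (_ | y) - h <;> dsimp only [Option.elim] at h
    · rfl
    · exact absurd (hf.mapsTo (Set.mem_univ y)) (h ▸ hb)
    · exact absurd (hf.mapsTo (Set.mem_univ x)) (h ▸ hb)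
    · exact congrArg some (hf.injOn trivial trivial h)
  · rintro y (rfl | hy)
    · exact ⟨none, trivial, rfl⟩
    · obtain ⟨x, -, rfl⟩ := hf.surjOn hy
      exact ⟨some x, trivial, rfl⟩

lemma Function.Injective.bijOn_univ_of_card_eq {α β : Type*} [Fintype α] {f : α → β}
    {t : Finset β} (hf : Function.Injective f) (hmaps : ∀ x, f x ∈ t)
    (hcard : Fintype.card α = #t) : Set.BijOn f Set.univ t := by
  have hmaps' : Set.MapsTo f (univ : Finset α) t := fun x _ => hmaps x
  have hsurj := surjOn_of_injOn_of_card_le f hmaps' hf.injOn (by rw [card_univ, hcard])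
  rw [coe_univ] at hmaps' hsurj
  exact ⟨hmaps', hf.injOn, hsurj⟩

lemma card_RTEdge {n : ℕ} (a : Fin n → ℕ) : Fintype.card (RTEdge n a) = n + ∑ i, a i := by
  simp

section RootedTree

variable {n : ℕ} {a : Fin n → ℕ}

lemma vertexSum_eq_elim_comp_swap (f : RTEdge n a → ℤ) (k : Fin n)
    (hroot : ∑ i, f (.inl i) = f (.inl k))
    (hleaves : ∀ i, ∑ m, f (.inr ⟨i, m⟩) = if i = k then -f (.inl k) else 0) :
    vertexSum a f = (fun o => o.elim 0 f) ∘ Equiv.swap none (some (.inl k)) := by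
  funext v
  rcases v with _ | i | ⟨i, m⟩
  · simp [vertexSum, hroot]
  · by_cases hi : i = k
    · subst hi; simp [vertexSum, hleaves]
    · simp [vertexSum, hleaves, hi, Equiv.swap_apply_of_ne_of_ne]
  · simp [vertexSum, Equiv.swap_apply_of_ne_of_ne]

theorem isSEG_of_leafSums (hq : Even (n + ∑ i, a i)) {f : RTEdge n a → ℤ}
    (hf : Set.BijOn f Set.univ (segSet (n + ∑ i, a i))) (k : Fin n)
    (hroot : ∑ i, f (.inl i) = f (.inl k))
    (hleaves : ∀ i, ∑ m, f (.inr ⟨i, m⟩) = if i = k then -f (.inl k) else 0) :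
    IsSEG a := by
  refine ⟨f, hf, ?_⟩
  rw [vertexSum_eq_elim_comp_swap f k hroot hleaves, segSet_succ_of_even hq, coe_insert]
  exact (bijOn_option_elim hf (zero_notMem_segSet_of_even hq)).comp
    (Set.bijOn_univ.mpr (Equiv.bijective _))

end RootedTree

def altLabel (s m : ℕ) : ℤ := if m % 2 = 0 then ((s + m / 2 : ℕ) : ℤ) else -((s + m / 2 : ℕ) : ℤ)

lemma sum_altLabel_range_two_mul (s k : ℕ) : ∑ m ∈ range (2 * k), altLabel s m = 0 := by
  induction k with
  | zero => simp
  | succ k ih =>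
    rw [mul_add, mul_one, sum_range_succ, sum_range_succ, ih, altLabel, altLabel,
      if_pos (by omega), if_neg (by omega), show (2 * k + 1) / 2 = 2 * k / 2 by omega]
    ring

def spokeLabel (j a b t : ℕ) : ℤ :=
  if t < j then (if t = 0 then -1 else altLabel 2 (t - 1))
  else if t = j then 1 else (((j + a + b + 2) / 2 : ℕ) : ℤ)

def leafLabel (j a b t m : ℕ) : ℤ :=
  if t = j then altLabel ((j + 1) / 2 + (b + 1) / 2) m
  else if m = 0 then -(((j + a + b + 2) / 2 : ℕ) : ℤ) else altLabel ((j + 1) / 2 + 1) (m - 1)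

def edgeLabel (j a b : ℕ) : RTEdge (j + 2) (seq2 j a b) → ℤ
  | .inl i => spokeLabel j a b i
  | .inr ⟨i, m⟩ => leafLabel j a b i m

section Seq2

variable {j a b : ℕ}

lemma lt_seq2_iff {i : Fin (j + 2)} {m : ℕ} :
    m < seq2 j a b i ↔ (i : ℕ) = j ∧ m < a ∨ (i : ℕ) = j + 1 ∧ m < b := by
  have := i.isLt
  unfold seq2
  split_ifs <;> omega

lemma sum_seq2 : ∑ i, seq2 j a b i = a + b := by
  simp [Fin.sum_univ_castSucc, seq2]

lemma even_card_edges_seq2 (hj : Odd j) (ha : Even a) (hb : Odd b) :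
    Even (j + 2 + ∑ i, seq2 j a b i) := by
  rw [sum_seq2]
  simp [hj, ha, hb, parity_simps]

lemma edgeLabel_injective (hj : Odd j) (ha : Even a) (hb : Odd b) :
    Function.Injective (edgeLabel j a b) := by
  rw [Nat.odd_iff] at hj hb
  rw [Nat.even_iff] at ha
  rintro (i | ⟨i, m⟩) (i' | ⟨i', m'⟩) h <;>
    simp only [edgeLabel, spokeLabel, leafLabel, altLabel] at h
  · have := i.isLt; have := i'.isLt
    exact congrArg Sum.inl (Fin.ext (by split_ifs at h <;> omega))
  · have := i.isLt; have := lt_seq2_iff.mp m'.isLt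
    exfalso; split_ifs at h <;> omega
  · have := i'.isLt; have := lt_seq2_iff.mp m.isLt
    exfalso; split_ifs at h <;> omega
  · have := lt_seq2_iff.mp m.isLt; have := lt_seq2_iff.mp m'.isLt
    obtain rfl : i = i' := Fin.ext (by split_ifs at h <;> omega)
    obtain rfl : m = m' := Fin.ext (by split_ifs at h <;> omega)
    rfl

lemma edgeLabel_mem_segSet (hj : Odd j) (ha : Even a) (hb : Odd b)
    (e : RTEdge (j + 2) (seq2 j a b)) :
    edgeLabel j a b e ∈ segSet (j + 2 + ∑ i, seq2 j a b i) := by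
  rw [mem_segSet_of_even (even_card_edges_seq2 hj ha hb), sum_seq2]
  rw [Nat.odd_iff] at hj hb
  rw [Nat.even_iff] at ha
  rcases e with i | ⟨i, m⟩ <;> simp only [edgeLabel, spokeLabel, leafLabel, altLabel]
  · have := i.isLt
    split_ifs <;> omega
  · have := lt_seq2_iff.mp m.isLt
    split_ifs <;> omega

lemma spokeLabel_last : spokeLabel j a b (j + 1) = (((j + a + b + 2) / 2 : ℕ) : ℤ) := by
  simp [spokeLabel]

lemma sum_spokeLabel (hj : Odd j) :
    ∑ i : Fin (j + 2), spokeLabel j a b i = (((j + a + b + 2) / 2 : ℕ) : ℤ) := by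
  obtain ⟨k, rfl⟩ := hj
  have hpairs : ∀ t ∈ range (2 * k), spokeLabel (2 * k + 1) a b (t + 1) = altLabel 2 t :=
    fun t ht => by rw [mem_range] at ht; simp [spokeLabel, ht]
  rw [Fin.sum_univ_eq_sum_range (spokeLabel _ a b), sum_range_succ, sum_range_succ,
    sum_range_succ', sum_congr rfl hpairs, sum_altLabel_range_two_mul]
  simp [spokeLabel]

lemma sum_leafLabel (ha : Even a) (hb : Odd b) (i : Fin (j + 2)) :
    ∑ m : Fin (seq2 j a b i), leafLabel j a b i m =
      if i = Fin.last (j + 1) then -(((j + a + b + 2) / 2 : ℕ) : ℤ) else 0 := by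
  rw [Fin.sum_univ_eq_sum_range (leafLabel j a b i)]
  obtain ⟨i, hi⟩ := i
  rcases (by omega : i < j ∨ i = j ∨ i = j + 1) with h | rfl | rfl
  · simp [seq2, h, Fin.ext_iff]; omega
  · obtain ⟨k, rfl⟩ := ha.two_dvd
    simp [seq2, Fin.ext_iff, leafLabel, sum_altLabel_range_two_mul]
  · obtain ⟨k, rfl⟩ := hb
    simp [seq2, Fin.ext_iff, sum_range_succ', leafLabel, sum_altLabel_range_two_mul]

end Seq2

theorem stmt1_general (j a b : ℕ) (hj : Odd j) (ha : Even a) (hb : Odd b) : IsSEG (seq2 j a b) := by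
  have hf : Set.BijOn (edgeLabel j a b) Set.univ (segSet (j + 2 + ∑ i, seq2 j a b i)) :=
    (edgeLabel_injective hj ha hb).bijOn_univ_of_card_eq (edgeLabel_mem_segSet hj ha hb)
      (by rw [card_RTEdge, card_segSet])
  refine isSEG_of_leafSums (even_card_edges_seq2 hj ha hb) hf (Fin.last (j + 1)) ?_ fun i => ?_
  · simpa [edgeLabel, spokeLabel_last] using sum_spokeLabel hj
  · simpa [edgeLabel, spokeLabel_last] using sum_leafLabel ha hb i

/-- For every odd integer `j ≥ 1`, every even integer `a ≥ 2`, and every odd integer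
`b ≥ 1`, the rooted tree `RT(0^j, a, b)` is super edge-graceful. -/
theorem stmt1 (j a b : ℕ) (hj : Odd j) (hj1 : 1 ≤ j) (ha : Even a) (ha2 : 2 ≤ a)
    (hb : Odd b) (hb1 : 1 ≤ b) : IsSEG (seq2 j a b) :=
  stmt1_general j a b hj ha hb
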